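/- Let Y be an n-digit Benford random variable taking values in the positive reals such that X = log₁₀ Y has probability density function g, and let g†(x) = Σ_{k ∈ ℤ} g(x + k) for x ∈ [0,1). Then for all digits d₁ ∈ {1,…,9}, d₂,…,dₙ ∈ {0,…,9} with xₙ = 10^{n−1}d₁ + ⋯ + dₙ, the integral of g† from 0 to log₁₀(xₙ/10^{n−1}) equals log₁₀(xₙ/10^{n−1}). -/

import Mathlib

open MeasureTheory Real

/-- The base-10 significand `S(y) = 10 ^ (log₁₀ y − ⌊log₁₀ y⌋) ∈ [1,10)`. -/
noncomputable def signif (y : ℝ) : ℝ :=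
  (10 : ℝ) ^ (Real.logb 10 y - (⌊Real.logb 10 y⌋ : ℝ))

/-- `d : Fin n → ℕ` is a valid digit tuple: every digit is at most 9 and the
leading digit (index 0) is at least 1. -/
def IsDigitTuple (n : ℕ) (d : Fin n → ℕ) : Prop :=
  (∀ i, d i ≤ 9) ∧ ∀ i : Fin n, (i : ℕ) = 0 → 1 ≤ d i

/-- `xₙ = 10^(n−1) d₁ + 10^(n−2) d₂ + ⋯ + dₙ` for a digit tuple `d`. -/
def digitVal (n : ℕ) (d : Fin n → ℕ) : ℕ :=
  ∑ i : Fin n, d i * 10 ^ (n - 1 - (i : ℕ))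

/-- `y > 0` has first `n` significant digits given by the tuple `d` iff
`⌊10^(n−1) · S(y)⌋ = xₙ`. -/
def HasFirstDigits (n : ℕ) (d : Fin n → ℕ) (y : ℝ) : Prop :=
  ⌊(10 : ℝ) ^ (n - 1) * signif y⌋ = (digitVal n d : ℤ)

/-- A random variable `Y` on `(Ω, P)` is `n`-digit Benford if for every valid
digit tuple `d`, the probability that the first `n` significant digits of `Y`
are `d₁, …, dₙ` equals `log₁₀ (1 + 1/xₙ)`. -/
def NDigitBenford {Ω : Type*} [MeasurableSpace Ω] (P : Measure Ω) (Y : Ω → ℝ)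
    (n : ℕ) : Prop :=
  ∀ d : Fin n → ℕ, IsDigitTuple n d →
    P {ω | HasFirstDigits n d (Y ω)}
      = ENNReal.ofReal (Real.logb 10 (1 + 1 / (digitVal n d : ℝ)))

/-- The expected significand sum `E[S_{d₁⋯dₙ} Y]`: the expectation of `S(Y)`
restricted to the event that the first `n` significant digits of `Y` are `d`. -/
noncomputable def expSignifSum {Ω : Type*} [MeasurableSpace Ω] (P : Measure Ω)
    (Y : Ω → ℝ) (n : ℕ) (d : Fin n → ℕ) : ℝ :=
  ∫ ω, Set.indicator {ω | HasFirstDigits n d (Y ω)} (fun ω => signif (Y ω)) ω ∂P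

/-!
Write `X = log₁₀ Y`. The leading `n` digits of `Y` are `m` exactly when `fract X` lies in
`[log₁₀ (m / 10^(n-1)), log₁₀ ((m + 1) / 10^(n-1)))`, an interval of length `log₁₀ (1 + 1/m)`;
so the Benford hypothesis says that `fract X` charges each such interval with its length, and
summing over `10^(n-1) ≤ m < xₙ` gives `P (fract X < t) = t` for `t = log₁₀ (xₙ / 10^(n-1))`.
On the other hand `{fract X < t}` is the disjoint union of the intervals `[k, k + t)`, and
translating each of them back to `[0, t)` turns `∫_{fract x < t} g` into `∫₀ᵗ g†`.
-/

open Finset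

section Periodization

variable {E : Type*} [NormedAddCommGroup E] [NormedSpace ℝ E]

lemma setIntegral_preimage_sub_eq (g : ℝ → E) (s : Set ℝ) (c : ℝ) :
    ∫ x in (fun x => x - c) ⁻¹' s, g x = ∫ x in s, g (x + c) := by
  simpa only [sub_add_cancel] using
    (measurePreserving_sub_right volume c).setIntegral_preimage_emb
      (measurableEmbedding_subRight c) (fun x => g (x + c)) s

lemma pairwise_disjoint_preimage_sub_intCast_inter_Ico (s : Set ℝ) :
    Pairwise (Function.onFun Disjoint
      fun m : ℤ => (fun x => x - (m : ℝ)) ⁻¹' (s ∩ Set.Ico 0 1)) := by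
  have hsub (m : ℤ) : (fun x => x - (m : ℝ)) ⁻¹' (s ∩ Set.Ico 0 1) ⊆ Set.Ico m (m + 1) :=
    fun x ⟨_, h0, h1⟩ => ⟨by linarith, by linarith⟩
  exact fun m m' hne => (Set.pairwise_disjoint_Ico_intCast ℝ hne).mono (hsub m) (hsub m')

variable {g : ℝ → E} {s : Set ℝ}

lemma hasSum_setIntegral_comp_add_intCast (hg : Integrable g) (hs : MeasurableSet s) :
    HasSum (fun m : ℤ => ∫ x in s ∩ Set.Ico 0 1, g (x + m))
      (∫ x in Int.fract ⁻¹' s, g x) := by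
  rw [Int.preimage_fract]
  convert hasSum_integral_iUnion
    (fun m : ℤ => (hs.inter measurableSet_Ico).preimage (measurable_sub_const (m : ℝ)))
    (pairwise_disjoint_preimage_sub_intCast_inter_Ico s) hg.integrableOn using 1
  exact funext fun m => (setIntegral_preimage_sub_eq g _ m).symm

lemma setIntegral_preimage_fract (hg : Integrable g) (hs : MeasurableSet s) :
    ∫ x in Int.fract ⁻¹' s, g x = ∫ x in s ∩ Set.Ico 0 1, ∑' m : ℤ, g (x + m) := by
  rw [← integral_tsum_of_summable_integral_norm (F := fun (m : ℤ) x => g (x + m))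
    (fun m => (hg.comp_add_right (m : ℝ)).integrableOn)
    (hasSum_setIntegral_comp_add_intCast hg.norm hs).summable]
  exact (hasSum_setIntegral_comp_add_intCast hg hs).tsum_eq.symm

lemma intervalIntegral_tsum_comp_add_intCast (hg : Integrable g) {b : ℝ} (hb0 : 0 ≤ b)
    (hb1 : b ≤ 1) :
    ∫ x in (0 : ℝ)..b, ∑' m : ℤ, g (x + m) = ∫ x in Int.fract ⁻¹' Set.Ico 0 b, g x := by
  rw [setIntegral_preimage_fract hg measurableSet_Ico,
    Set.Ico_inter_Ico, max_self, min_eq_left hb1, intervalIntegral.integral_of_le hb0,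
    setIntegral_congr_set Ico_ae_eq_Ioc]

end Periodization

section Digits

lemma sum_range_div_pow_mod_mul_pow (b m n : ℕ) :
    ∑ j ∈ range n, m / b ^ j % b * b ^ j = m % b ^ n := by
  induction n with
  | zero => simp [Nat.mod_one]
  | succ n ih => rw [sum_range_succ, ih, Nat.mod_pow_succ, mul_comm]

lemma digitVal_lt_pow {n : ℕ} {d : Fin n → ℕ} (hd : ∀ i, d i ≤ 9) :
    digitVal n d < 10 ^ n := by
  have hgeom : (∑ j ∈ range n, 10 ^ j) * 9 + 1 = 10 ^ n := geom_sum_mul_add 9 n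
  have hle : digitVal n d ≤ ∑ i : Fin n, 9 * 10 ^ (n - 1 - (i : ℕ)) :=
    sum_le_sum fun i _ => Nat.mul_le_mul_right _ (hd i)
  rw [Fin.sum_univ_eq_sum_range (fun i => 9 * 10 ^ (n - 1 - i)),
    sum_range_reflect (fun j => 9 * 10 ^ j), ← mul_sum] at hle
  omega

lemma pow_le_digitVal {n : ℕ} {d : Fin n → ℕ} (hn : 0 < n) (hd : 1 ≤ d ⟨0, hn⟩) :
    10 ^ (n - 1) ≤ digitVal n d :=
  calc 10 ^ (n - 1) ≤ d ⟨0, hn⟩ * 10 ^ (n - 1 - 0) := by simpa using hd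
    _ ≤ digitVal n d :=
      single_le_sum (f := fun i : Fin n => d i * 10 ^ (n - 1 - (i : ℕ)))
        (fun i _ => Nat.zero_le _) (mem_univ _)

def digitsOf (n m : ℕ) : Fin n → ℕ := fun i => m / 10 ^ (n - 1 - (i : ℕ)) % 10

lemma digitVal_digitsOf {n m : ℕ} (hm : m < 10 ^ n) : digitVal n (digitsOf n m) = m := by
  unfold digitVal digitsOf
  rw [Fin.sum_univ_eq_sum_range (fun i => m / 10 ^ (n - 1 - i) % 10 * 10 ^ (n - 1 - i)),
    sum_range_reflect (fun j => m / 10 ^ j % 10 * 10 ^ j), sum_range_div_pow_mod_mul_pow,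
    Nat.mod_eq_of_lt hm]

lemma isDigitTuple_digitsOf {n m : ℕ} (h1 : 10 ^ (n - 1) ≤ m) (h2 : m < 10 ^ n) :
    IsDigitTuple n (digitsOf n m) := by
  refine ⟨fun i => Nat.le_of_lt_succ (Nat.mod_lt _ (by norm_num)), fun i hi => ?_⟩
  have hpos : 0 < 10 ^ (n - 1) := by positivity
  have hlt : m / 10 ^ (n - 1) < 10 := by
    rw [Nat.div_lt_iff_lt_mul hpos, ← pow_succ', Nat.sub_add_cancel (by have := i.2; omega)]
    exact h2
  rw [digitsOf, hi, Nat.sub_zero, Nat.mod_eq_of_lt hlt]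
  exact (Nat.one_le_div_iff hpos).2 h1

end Digits

section Benford

/-- A positive real has leading digits `m` exactly when the fractional part of its `log₁₀`
lies in `[digitBoundary n m, digitBoundary n (m + 1))`. -/
noncomputable def digitBoundary (n m : ℕ) : ℝ := logb 10 ((m : ℝ) / 10 ^ (n - 1))

lemma digitBoundary_monotoneOn (n : ℕ) : MonotoneOn (digitBoundary n) (Set.Ici 1) := by
  intro a ha b _ hab
  have ha' : (0 : ℝ) < a := by exact_mod_cast ha
  unfold digitBoundary
  gcongr
  norm_num

lemma digitBoundary_pow_pred (n : ℕ) : digitBoundary n (10 ^ (n - 1)) = 0 := by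
  simp [digitBoundary]

lemma digitBoundary_pow {n : ℕ} (hn : 1 ≤ n) : digitBoundary n (10 ^ n) = 1 := by
  have h : ((10 ^ n : ℕ) : ℝ) / 10 ^ (n - 1) = 10 := by
    rw [Nat.cast_pow, Nat.cast_ofNat, div_eq_iff (by positivity), ← pow_succ',
      Nat.sub_add_cancel hn]
  rw [digitBoundary, h, logb_self_eq_one (by norm_num)]

lemma digitBoundary_nonneg {n q : ℕ} (hq : 10 ^ (n - 1) ≤ q) : 0 ≤ digitBoundary n q := by
  have h1 : 1 ≤ 10 ^ (n - 1) := Nat.one_le_pow _ _ (by norm_num)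
  exact digitBoundary_pow_pred n ▸ digitBoundary_monotoneOn n h1 (h1.trans hq) hq

lemma digitBoundary_le_one {n q : ℕ} (hn : 1 ≤ n) (hq1 : 1 ≤ q) (hq : q ≤ 10 ^ n) :
    digitBoundary n q ≤ 1 :=
  digitBoundary_pow hn ▸ digitBoundary_monotoneOn n hq1 (le_trans hq1 hq) hq

lemma digitBoundary_succ_sub {m : ℕ} (n : ℕ) (hm : 0 < m) :
    digitBoundary n (m + 1) - digitBoundary n m = logb 10 (1 + 1 / (m : ℝ)) := by
  have hm' : (0 : ℝ) < m := by exact_mod_cast hm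
  rw [digitBoundary, digitBoundary, ← logb_div (by positivity) (by positivity)]
  congr 1
  field_simp
  push_cast
  ring

lemma signif_eq_rpow_fract (y : ℝ) : signif y = 10 ^ Int.fract (logb 10 y) := rfl

lemma floor_mul_signif_eq_iff (n : ℕ) {m : ℕ} (hm : 0 < m) (y : ℝ) :
    ⌊(10 : ℝ) ^ (n - 1) * signif y⌋ = m ↔
      Int.fract (logb 10 y) ∈ Set.Ico (digitBoundary n m) (digitBoundary n (m + 1)) := by
  have hN : (0 : ℝ) < 10 ^ (n - 1) := by positivity
  have hm' : (0 : ℝ) < m := by exact_mod_cast hm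
  rw [signif_eq_rpow_fract, Int.floor_eq_iff, Set.mem_Ico, digitBoundary, digitBoundary,
    logb_le_iff_le_rpow (by norm_num) (by positivity),
    lt_logb_iff_rpow_lt (by norm_num) (by positivity), div_le_iff₀' hN, lt_div_iff₀' hN]
  exact_mod_cast Iff.rfl

lemma measure_Ico_eq_ofReal_sub {μ : Measure ℝ} {t : ℕ → ℝ} {a b : ℕ} (hab : a ≤ b)
    (ht : MonotoneOn t (Set.Ici a))
    (h : ∀ m, a ≤ m → m < b →
      μ (Set.Ico (t m) (t (m + 1))) = ENNReal.ofReal (t (m + 1) - t m)) :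
    μ (Set.Ico (t a) (t b)) = ENNReal.ofReal (t b - t a) := by
  induction b, hab using Nat.le_induction with
  | base => simp
  | succ b hab ih =>
    have h1 : t a ≤ t b := ht (Set.mem_Ici.2 le_rfl) hab hab
    have h2 : t b ≤ t (b + 1) := ht hab (Set.mem_Ici.2 (by omega)) (by omega)
    rw [← Set.Ico_union_Ico_eq_Ico h1 h2,
      measure_union Set.Ico_disjoint_Ico_same measurableSet_Ico,
      ih fun m hm hm' => h m hm (by omega), h b hab (by omega),
      ← ENNReal.ofReal_add (sub_nonneg.2 h1) (sub_nonneg.2 h2), sub_add_sub_cancel']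

end Benford

namespace NDigitBenford

variable {Ω : Type*} [MeasurableSpace Ω] {P : Measure Ω} {Y : Ω → ℝ} {n : ℕ}

lemma measure_fract_logb_mem_Ico (hben : NDigitBenford P Y n) {m : ℕ} (h1 : 10 ^ (n - 1) ≤ m)
    (h2 : m < 10 ^ n) :
    P {ω | Int.fract (logb 10 (Y ω)) ∈ Set.Ico (digitBoundary n m) (digitBoundary n (m + 1))}
      = ENNReal.ofReal (digitBoundary n (m + 1) - digitBoundary n m) := by
  have hm : 0 < m := lt_of_lt_of_le (by positivity) h1
  have hevent : {ω | Int.fract (logb 10 (Y ω)) ∈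
        Set.Ico (digitBoundary n m) (digitBoundary n (m + 1))}
      = {ω | HasFirstDigits n (digitsOf n m) (Y ω)} := by
    ext ω
    simp only [Set.mem_ofPred_eq, HasFirstDigits, digitVal_digitsOf h2,
      floor_mul_signif_eq_iff n hm]
  rw [hevent, hben _ (isDigitTuple_digitsOf h1 h2), digitVal_digitsOf h2,
    digitBoundary_succ_sub n hm]

lemma measure_fract_logb_lt (hben : NDigitBenford P Y n) (hY : Measurable Y) {q : ℕ}
    (h1 : 10 ^ (n - 1) ≤ q) (h2 : q ≤ 10 ^ n) :
    P ((fun ω => logb 10 (Y ω)) ⁻¹' (Int.fract ⁻¹' Set.Ico 0 (digitBoundary n q)))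
      = ENNReal.ofReal (digitBoundary n q) := by
  have hZ : Measurable fun ω => Int.fract (logb 10 (Y ω)) :=
    measurable_fract.comp ((measurable_log.comp hY).div_const _)
  have hmono : MonotoneOn (digitBoundary n) (Set.Ici (10 ^ (n - 1))) :=
    (digitBoundary_monotoneOn n).mono (Set.Ici_subset_Ici.2 (Nat.one_le_pow _ _ (by norm_num)))
  have h := measure_Ico_eq_ofReal_sub (μ := P.map fun ω => Int.fract (logb 10 (Y ω))) h1 hmono
    fun m hm hm' => by
      rw [Measure.map_apply hZ measurableSet_Ico]
      exact hben.measure_fract_logb_mem_Ico hm (by omega)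
  rwa [Measure.map_apply hZ measurableSet_Ico, digitBoundary_pow_pred, sub_zero] at h

end NDigitBenford

theorem integral_wrapped_to_digit_boundary_general {Ω : Type*} [MeasurableSpace Ω]
    (P : Measure Ω) (Y : Ω → ℝ) (hY : Measurable Y)
    (g : ℝ → ℝ) (hg0 : ∀ x, 0 ≤ g x) (hgInt : Integrable g)
    (hgpdf : P.map (fun ω => Real.logb 10 (Y ω))
      = volume.withDensity (fun x => ENNReal.ofReal (g x)))
    (n : ℕ) (hn : 1 ≤ n) (hben : NDigitBenford P Y n)
    (d : Fin n → ℕ) (hd : IsDigitTuple n d) :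
    (∫ x in (0 : ℝ)..Real.logb 10 ((digitVal n d : ℝ) / 10 ^ (n - 1)),
        ∑' k : ℤ, g (x + (k : ℝ)))
      = Real.logb 10 ((digitVal n d : ℝ) / 10 ^ (n - 1)) := by
  have hq1 : 10 ^ (n - 1) ≤ digitVal n d := pow_le_digitVal hn (hd.2 ⟨0, hn⟩ rfl)
  have hq2 : digitVal n d < 10 ^ n := digitVal_lt_pow hd.1
  have ht0 : 0 ≤ digitBoundary n (digitVal n d) := digitBoundary_nonneg hq1
  have ht1 : digitBoundary n (digitVal n d) ≤ 1 :=
    digitBoundary_le_one hn (le_trans (Nat.one_le_pow _ _ (by norm_num)) hq1) hq2.le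
  have hX : Measurable fun ω => logb 10 (Y ω) := (measurable_log.comp hY).div_const _
  have hS : MeasurableSet (Int.fract ⁻¹' Set.Ico (0 : ℝ) (digitBoundary n (digitVal n d))) :=
    measurable_fract measurableSet_Ico
  change ∫ x in (0 : ℝ)..digitBoundary n (digitVal n d), ∑' k : ℤ, g (x + k)
    = digitBoundary n (digitVal n d)
  rw [intervalIntegral_tsum_comp_add_intCast hgInt ht0 ht1,
    ← ENNReal.ofReal_eq_ofReal_iff (setIntegral_nonneg hS fun x _ => hg0 x) ht0,
    ofReal_integral_eq_lintegral_ofReal hgInt.integrableOn (ae_of_all _ hg0),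
    ← withDensity_apply _ hS, ← hgpdf, Measure.map_apply hX hS]
  exact hben.measure_fract_logb_lt hY hq1 hq2.le

/-- **Integral of the wrapped density up to a digit boundary.**
If `Y` is `n`-digit Benford and `X = log₁₀ Y` has probability density `g`,
with `g†(x) = Σ_{k ∈ ℤ} g(x + k)`, then for every digit tuple `d₁, …, dₙ` with
`xₙ = 10^(n−1) d₁ + ⋯ + dₙ`,
`∫_0^{log₁₀(xₙ/10^(n−1))} g†(x) dx = log₁₀ (xₙ / 10^(n−1))`. -/
theorem integral_wrapped_to_digit_boundary {Ω : Type*} [MeasurableSpace Ω]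
    (P : Measure Ω) [IsProbabilityMeasure P] (Y : Ω → ℝ) (hY : Measurable Y)
    (hYpos : ∀ ω, 0 < Y ω) (g : ℝ → ℝ) (hg0 : ∀ x, 0 ≤ g x) (hgInt : Integrable g)
    (hgpdf : P.map (fun ω => Real.logb 10 (Y ω))
      = volume.withDensity (fun x => ENNReal.ofReal (g x)))
    (n : ℕ) (hn : 1 ≤ n) (hben : NDigitBenford P Y n)
    (d : Fin n → ℕ) (hd : IsDigitTuple n d) :
    (∫ x in (0 : ℝ)..Real.logb 10 ((digitVal n d : ℝ) / 10 ^ (n - 1)),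
        ∑' k : ℤ, g (x + (k : ℝ)))
      = Real.logb 10 ((digitVal n d : ℝ) / 10 ^ (n - 1)) :=
  integral_wrapped_to_digit_boundary_general P Y hY g hg0 hgInt hgpdf n hn hben d hd
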